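/- Fix an integer m ≥ 0 and ε > 0. Let X_1,…,X_K be identically distributed unbounded random variables with continuous CDF F that are m-dependent, let M_K be a sequence of integers with M_K/K → 0 and M_K ≥ (m+1)(e+ε)·ln K, set δ_K = q̄_F(M_K/(e(K+m+1))) where q̄_F(p) = min{x : F(x) ≥ 1 − p}, and let 𝓜_K = {k : X_k ≥ X_{(K−M_K+1)}} be the (random) set of M_K-best indices. Then there exists K₀ such that for every K > K₀ and every deterministic subset 𝓔 ⊆ {1,…,K} with |𝓔| = E: (i) P(X_{(K−M_K+1)} > δ_K) ≤ (m+1)/K^{1+ε/3}; and (ii) P(𝓜_K ∩ 𝓔 = ∅) ≤ (m+1)·exp(−(M_K/(e(m+1)))·(1 − (m+1)/K)/(1 + (m+1)/K)) + (1 − M_K/(e(K+m+1)))^{E/(m+1)}. -/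

import Mathlib

open MeasureTheory ProbabilityTheory Filter

/-- The cumulative distribution function of a real random variable `X` under `μ`. -/
noncomputable def cdfOf {Ω : Type*} [MeasurableSpace Ω] (μ : Measure Ω) (X : Ω → ℝ) : ℝ → ℝ :=
  fun x => (μ {ω | X ω ≤ x}).toReal

/-- `orderStat v j` is the `j`-th smallest value (1-indexed) among `v 0, …, v (K-1)`. -/
noncomputable def orderStat {K : ℕ} (v : Fin K → ℝ) (j : ℕ) : ℝ :=
  ((Finset.univ.val.map v).sort (· ≤ ·)).getD (j - 1) 0

/-- A finite family of random variables is `m`-dependent: every subfamily whose indices are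
pairwise more than `m` apart is jointly independent. -/
def MDepFam {Ω β : Type*} [MeasurableSpace Ω] [MeasurableSpace β] (μ : Measure Ω) (m : ℕ)
    {K : ℕ} (X : Fin K → Ω → β) : Prop :=
  ∀ S : Finset (Fin K),
    (∀ i ∈ S, ∀ j ∈ S, i ≠ j → (m : ℤ) < |(i : ℤ) - (j : ℤ)|) →
    iIndepFun (fun i : S => X i.1) μ

/-- `F` has an exponentially-dominated tail with parameters `(α, β, lam, γ)`:
`(1 - F x)/(α x^β e^{-lam x^γ}) → 1` as `x → ∞`. -/
def ExpDomTail (F : ℝ → ℝ) (α β lam γ : ℝ) : Prop :=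
  Tendsto (fun x : ℝ => (1 - F x) / (α * x ^ β * Real.exp (-lam * x ^ γ))) atTop (nhds 1)

/-- Tail quantile function `q̄_F(p) = min {x | F x ≥ 1 - p}` (as an infimum). -/
noncomputable def tailQuantile (F : ℝ → ℝ) (p : ℝ) : ℝ := sInf {x | 1 - p ≤ F x}

/-!
Put `p = M/(e(K+m+1))` and `δ = q̄_F(p)`, so that each `X_k` exceeds `δ` with probability
exactly `p` by continuity of `F`. If the `(K-M+1)`-th order statistic exceeds `δ`, then at least
`M` of the `X_k` do, so by pigeonhole at least `M/(m+1)` of them within one residue class mod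
`m+1`. Indices in one class are more than `m` apart, hence independent, and a Chernoff bound
for the count of exceedances in each class, summed over the `m+1` classes, gives
`(m+1) exp(-M/(e(m+1)))`, which the growth assumption on `M` turns into `(m+1)/K^{1+ε/3}`.
For (ii), if no index of `𝓔` is among the `M` best and the order statistic is at most `δ`, then
every `X_k` with `k` in some residue class of `𝓔` of size at least `|𝓔|/(m+1)` lies below `δ`,
which by independence has probability at most `(1-p)^{|𝓔|/(m+1)}`; the exponential term of
(ii) merely weakens the bound of (i), its extra factor being at most `1`.
-/

open Real Finset

section TailQuantile

lemma apply_tailQuantile {F : ℝ → ℝ} (hF : Continuous F) (htop : Tendsto F atTop (nhds 1))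
    (hbot : Tendsto F atBot (nhds 0)) {p : ℝ} (hp0 : 0 < p) (hp1 : p < 1) :
    F (tailQuantile F p) = 1 - p := by
  set S := {x | 1 - p ≤ F x}
  have hne : S.Nonempty := (htop.eventually (eventually_ge_nhds (by linarith))).exists
  have hbdd : BddBelow S := by
    obtain ⟨a, ha⟩ := eventually_atBot.mp
      (hbot.eventually (eventually_lt_nhds (show (0 : ℝ) < 1 - p by linarith)))
    exact ⟨a, fun y hy => le_of_not_ge fun hya => (ha y hya).not_ge hy⟩
  have hmem : tailQuantile F p ∈ S := (isClosed_Ici.preimage hF).csInf_mem hne hbdd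
  refine le_antisymm (le_of_not_gt fun hlt => ?_) hmem
  have hnear : ∀ᶠ x in nhdsWithin (tailQuantile F p) (Set.Iio (tailQuantile F p)),
      1 - p < F x ∧ x < tailQuantile F p :=
    ((hF.tendsto _).eventually (lt_mem_nhds hlt)).filter_mono nhdsWithin_le_nhds
      |>.and self_mem_nhdsWithin
  obtain ⟨x, hxS, hx⟩ := hnear.exists
  exact (csInf_le hbdd hxS.le).not_gt hx

variable {Ω : Type*} [MeasurableSpace Ω] {μ : Measure Ω} [IsProbabilityMeasure μ] {X : Ω → ℝ}

lemma cdfOf_eq_cdf_map (hX : Measurable X) : cdfOf μ X = cdf (μ.map X) := by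
  have := Measure.isProbabilityMeasure_map (μ := μ) hX.aemeasurable
  ext x
  rw [cdf_eq_real, measureReal_def, Measure.map_apply hX measurableSet_Iic]
  rfl

lemma tendsto_cdfOf_atTop (hX : Measurable X) : Tendsto (cdfOf μ X) atTop (nhds 1) := by
  have := Measure.isProbabilityMeasure_map (μ := μ) hX.aemeasurable
  rw [cdfOf_eq_cdf_map hX]
  exact tendsto_cdf_atTop _

lemma tendsto_cdfOf_atBot (hX : Measurable X) : Tendsto (cdfOf μ X) atBot (nhds 0) := by
  have := Measure.isProbabilityMeasure_map (μ := μ) hX.aemeasurable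
  rw [cdfOf_eq_cdf_map hX]
  exact tendsto_cdf_atBot _

lemma measure_lt_le_cdfOf (x : ℝ) : μ {ω | X ω < x} ≤ ENNReal.ofReal (cdfOf μ X x) := by
  rw [cdfOf, ENNReal.ofReal_toReal (measure_ne_top _ _)]
  exact measure_mono fun ω (h : X ω < x) => h.le

lemma measureReal_lt_eq_one_sub_cdfOf (hX : Measurable X) (x : ℝ) :
    μ.real {ω | x < X ω} = 1 - cdfOf μ X x := by
  have : {ω | x < X ω} = {ω | X ω ≤ x}ᶜ := by ext; simp
  rw [this, probReal_compl_eq_one_sub (measurableSet_le hX measurable_const)]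
  rfl

lemma measureReal_tailQuantile_lt (hX : Measurable X) (hF : Continuous (cdfOf μ X)) {p : ℝ}
    (hp0 : 0 < p) (hp1 : p < 1) : μ.real {ω | tailQuantile (cdfOf μ X) p < X ω} = p := by
  rw [measureReal_lt_eq_one_sub_cdfOf hX, apply_tailQuantile hF (tendsto_cdfOf_atTop hX)
    (tendsto_cdfOf_atBot hX) hp0 hp1]
  ring

lemma measure_lt_tailQuantile_le (hX : Measurable X) (hF : Continuous (cdfOf μ X)) {p : ℝ}
    (hp0 : 0 < p) (hp1 : p < 1) :
    μ {ω | X ω < tailQuantile (cdfOf μ X) p} ≤ ENNReal.ofReal (1 - p) := by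
  rw [← apply_tailQuantile hF (tendsto_cdfOf_atTop hX) (tendsto_cdfOf_atBot hX) hp0 hp1]
  exact measure_lt_le_cdfOf _

end TailQuantile

lemma le_card_filter_lt_of_lt_orderStat {K : ℕ} (v : Fin K → ℝ) {δ : ℝ} {j : ℕ} (hj1 : 1 ≤ j)
    (hjK : j ≤ K) (h : δ < orderStat v j) : K + 1 - j ≤ #{k | δ < v k} := by
  set l := (univ.val.map v).sort (· ≤ ·)
  have hlen : l.length = K := by simp [l]
  have hsorted : l.SortedLE := (Multiset.pairwise_sort _ _).sortedLE
  have hidx : j - 1 < l.length := by omega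
  have hlt : δ < l[j - 1] := by
    rwa [orderStat, List.getD_eq_getElem _ _ hidx] at h
  have hdrop : ∀ x ∈ l.drop (j - 1), δ < x := by
    intro x hx
    obtain ⟨i, hi, rfl⟩ := List.getElem_of_mem hx
    rw [List.getElem_drop]
    exact hlt.trans_le (hsorted.getElem_le_getElem_of_le (by omega))
  calc K + 1 - j = (l.drop (j - 1)).countP (fun x => δ < x) := by
        rw [List.countP_eq_length.mpr (by simpa using hdrop), List.length_drop]; omega
    _ ≤ l.countP (fun x => δ < x) := (List.drop_sublist _ _).countP_le
    _ = #{k | δ < v k} := by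
        rw [← Multiset.coe_countP, Multiset.sort_eq, Multiset.countP_map]
        rfl

section ResidueClass

def residueClass (K n r : ℕ) : Finset (Fin K) := {k | (k : ℕ) % n = r}

lemma card_residueClass_le (K n r : ℕ) : n * #(residueClass K n r) ≤ K + n := by
  have hinj : Set.InjOn (fun k : Fin K => (k : ℕ) / n) (residueClass K n r) := by
    intro a ha b hb hab
    simp only [residueClass, coe_filter, mem_univ, true_and] at ha hb
    apply Fin.ext
    rw [← Nat.div_add_mod a n, ← Nat.div_add_mod b n, ha, hb]
    simp_all
  have hcard : #(residueClass K n r) ≤ K / n + 1 := by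
    simpa using card_le_card_of_injOn _ (fun k _ => mem_range.mpr
      (Nat.lt_succ_of_le (Nat.div_le_div_right k.isLt.le))) hinj
  calc n * #(residueClass K n r) ≤ n * (K / n) + n := by nlinarith
    _ ≤ K + n := by have := Nat.mul_div_le K n; omega

lemma exists_card_inter_residueClass_ge {K n : ℕ} (hn : 0 < n) (T : Finset (Fin K)) :
    ∃ r < n, (#T : ℝ) / n ≤ #(T ∩ residueClass K n r) := by
  obtain ⟨r, hr, hle⟩ := exists_le_card_fiber_of_nsmul_le_card_of_maps_to
    (f := fun k : Fin K => (k : ℕ) % n) (t := range n) (b := (#T : ℝ) / n)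
    (fun k _ => mem_range.mpr (Nat.mod_lt _ hn)) (nonempty_range_iff.mpr hn.ne')
    (by rw [card_range, nsmul_eq_mul]; field_simp; rfl)
  refine ⟨r, mem_range.mp hr, hle.trans_eq ?_⟩
  congr 2
  ext k
  simp [residueClass]

lemma MDepFam.iIndepFun_of_subset_residueClass {Ω β : Type*} [MeasurableSpace Ω]
    [MeasurableSpace β] {μ : Measure Ω} {m K : ℕ} {X : Fin K → Ω → β} (hX : MDepFam μ m X)
    {S : Finset (Fin K)} {r : ℕ} (hS : S ⊆ residueClass K (m + 1) r) :
    iIndepFun (fun i : S => X i.1) μ := by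
  refine hX S fun i hi j hj hij => ?_
  have hmod : (j : ℕ) ≡ i [MOD m + 1] := by
    have := hS hi; have := hS hj; simp_all [residueClass, Nat.ModEq]
  have hdvd : ((m + 1 : ℕ) : ℤ) ∣ |(i : ℤ) - j| :=
    (dvd_abs _ _).mpr (Nat.modEq_iff_dvd.mp hmod)
  have hne : (i : ℤ) - j ≠ 0 := sub_ne_zero.mpr (by exact_mod_cast Fin.val_ne_of_ne hij)
  have := Int.le_of_dvd (abs_pos.mpr hne) hdvd
  push_cast at this
  omega

end ResidueClass

section Chernoff

variable {Ω : Type*} [MeasurableSpace Ω] {μ : Measure Ω}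

lemma mgf_indicator_one [IsProbabilityMeasure μ] {A : Set Ω} (hA : MeasurableSet A) (t : ℝ) :
    mgf (A.indicator 1) μ t = 1 + (exp t - 1) * μ.real A := by
  have hexp : (fun ω => exp (t * A.indicator 1 ω)) =
      fun ω => 1 + (exp t - 1) * A.indicator 1 ω := by
    ext ω
    by_cases h : ω ∈ A <;> simp [h]
  rw [mgf, hexp, integral_add (integrable_const 1)
    (((integrable_const 1).indicator hA).const_mul _), integral_const_mul,
    integral_indicator_one hA]
  simp

theorem measureReal_le_sum_indicator_le {ι : Type*} [Fintype ι] {A : ι → Set Ω}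
    (hA : ∀ i, MeasurableSet (A i))
    (hind : iIndepFun (fun i => (A i).indicator (1 : Ω → ℝ)) μ)
    {p : ℝ} (hp : ∀ i, μ.real (A i) ≤ p) (t : ℝ) :
    μ.real {ω | t ≤ ∑ i, (A i).indicator 1 ω} ≤
      exp (-t + (exp 1 - 1) * p * Fintype.card ι) := by
  have := hind.isProbabilityMeasure
  have hmeas : ∀ i, Measurable ((A i).indicator (1 : Ω → ℝ)) :=
    fun i => measurable_const.indicator (hA i)
  have hint : Integrable (fun ω => exp (1 * (∑ i, (A i).indicator (1 : Ω → ℝ)) ω)) μ :=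
    hind.integrable_exp_mul_sum hmeas fun i _ =>
      Integrable.of_bound (by fun_prop) (exp 1) (ae_of_all _ fun ω => by
        by_cases h : ω ∈ A i <;> simp [h])
  have hmgf : ∀ i, mgf ((A i).indicator 1) μ 1 ≤ exp ((exp 1 - 1) * p) := fun i => by
    rw [mgf_indicator_one (hA i)]
    have he : 0 ≤ exp 1 - 1 := by linarith [add_one_le_exp 1]
    linarith [add_one_le_exp ((exp 1 - 1) * p), mul_le_mul_of_nonneg_left (hp i) he]
  calc μ.real {ω | t ≤ ∑ i, (A i).indicator 1 ω}
      = μ.real {ω | t ≤ (∑ i, (A i).indicator (1 : Ω → ℝ)) ω} := by simp only [Finset.sum_apply]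
    _ ≤ exp (-1 * t) * mgf (∑ i, (A i).indicator 1) μ 1 :=
      measure_ge_le_exp_mul_mgf t zero_le_one hint
    _ = exp (-t) * ∏ i, mgf ((A i).indicator 1) μ 1 := by rw [hind.mgf_sum hmeas, neg_one_mul]
    _ ≤ exp (-t) * ∏ _i : ι, exp ((exp 1 - 1) * p) := by
      gcongr with i
      · exact fun i _ => mgf_nonneg
      · exact hmgf i
    _ = exp (-t + (exp 1 - 1) * p * Fintype.card ι) := by
      rw [prod_const, card_univ, ← exp_nat_mul, ← exp_add]
      ring_nf

end Chernoff

section MDependent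

variable {Ω : Type*} [MeasurableSpace Ω] {μ : Measure Ω} {m K : ℕ} {X : Fin K → Ω → ℝ}

lemma MDepFam.measureReal_le_card_filter_residueClass_lt_le (hX : MDepFam μ m X)
    (hmeas : ∀ k, Measurable (X k)) {δ p : ℝ} (hp : ∀ k, μ.real {ω | δ < X k ω} ≤ p)
    (r : ℕ) (s : ℝ) :
    μ.real {ω | s ≤ #{k ∈ residueClass K (m + 1) r | δ < X k ω}} ≤
      exp (-s + (exp 1 - 1) * p * #(residueClass K (m + 1) r)) := by
  set C := residueClass K (m + 1) r
  have hind : iIndepFun (fun i : C => {ω | δ < X i ω}.indicator (1 : Ω → ℝ)) μ :=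
    (hX.iIndepFun_of_subset_residueClass subset_rfl).comp (fun _ => (Set.Ioi δ).indicator 1)
      fun _ => measurable_const.indicator measurableSet_Ioi
  have hcount : ∀ ω, ∑ i : C, {ω | δ < X i ω}.indicator (1 : Ω → ℝ) ω =
      #{k ∈ C | δ < X k ω} := by
    intro ω
    rw [sum_coe_sort C fun k => {ω | δ < X k ω}.indicator (1 : Ω → ℝ) ω]
    simp [Set.indicator_apply]
  have := measureReal_le_sum_indicator_le
    (fun i : C => measurableSet_lt measurable_const (hmeas i)) hind (fun i => hp i) s
  simp only [hcount, Fintype.card_coe] at this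
  exact this

lemma MDepFam.measure_le_card_filter_lt_le [IsProbabilityMeasure μ] (hX : MDepFam μ m X)
    (hmeas : ∀ k, Measurable (X k)) {δ p : ℝ} (hp0 : 0 ≤ p)
    (hp : ∀ k, μ.real {ω | δ < X k ω} ≤ p) (t : ℝ) :
    μ {ω | t ≤ #{k | δ < X k ω}} ≤ ENNReal.ofReal ((m + 1) *
      exp (-(t / (m + 1)) + (exp 1 - 1) * p * ((K + m + 1) / (m + 1)))) := by
  have hm : (0 : ℝ) < m + 1 := by positivity
  set bound := exp (-(t / (m + 1)) + (exp 1 - 1) * p * ((K + m + 1) / (m + 1)))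
  have hsub : {ω | t ≤ #{k | δ < X k ω}} ⊆ ⋃ r ∈ range (m + 1),
      {ω | t / (m + 1) ≤ #{k ∈ residueClass K (m + 1) r | δ < X k ω}} := by
    intro ω (hω : t ≤ _)
    obtain ⟨r, hr, hle⟩ := exists_card_inter_residueClass_ge m.succ_pos {k | δ < X k ω}
    refine Set.mem_biUnion (mem_range.mpr hr) ?_
    rw [inter_comm, inter_filter, inter_univ, Nat.cast_succ] at hle
    exact (div_le_div_of_nonneg_right hω hm.le).trans hle
  have hclass : ∀ r, μ {ω | t / (m + 1) ≤ #{k ∈ residueClass K (m + 1) r | δ < X k ω}} ≤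
      ENNReal.ofReal bound := by
    intro r
    rw [← ofReal_measureReal]
    refine ENNReal.ofReal_le_ofReal
      ((hX.measureReal_le_card_filter_residueClass_lt_le hmeas hp r _).trans ?_)
    have hcard : (#(residueClass K (m + 1) r) : ℝ) ≤ (K + m + 1) / (m + 1) := by
      rw [le_div_iff₀ hm]
      have := card_residueClass_le K (m + 1) r
      exact_mod_cast (by linarith : #(residueClass K (m + 1) r) * (m + 1) ≤ K + m + 1)
    have he : 0 ≤ exp 1 - 1 := by linarith [add_one_le_exp 1]
    simp only [bound]
    gcongr
  calc μ {ω | t ≤ #{k | δ < X k ω}} ≤ ∑ r ∈ range (m + 1),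
        μ {ω | t / (m + 1) ≤ #{k ∈ residueClass K (m + 1) r | δ < X k ω}} :=
      (measure_mono hsub).trans (measure_biUnion_finset_le _ _)
    _ ≤ ∑ r ∈ range (m + 1), ENNReal.ofReal bound := sum_le_sum fun r _ => hclass r
    _ = ENNReal.ofReal ((m + 1) * bound) := by
      rw [sum_const, card_range, nsmul_eq_mul, ENNReal.ofReal_mul hm.le]
      norm_cast

end MDependent

section OrderStatTail

variable {Ω : Type*} [MeasurableSpace Ω] {μ : Measure Ω} [IsProbabilityMeasure μ] {m K M : ℕ}
  {F : ℝ → ℝ} {X : Fin K → Ω → ℝ}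

lemma div_exp_mul_mem_Ioo (m : ℕ) (hM1 : 1 ≤ M) (hMK : M ≤ K) :
    (M : ℝ) / (exp 1 * (K + m + 1)) ∈ Set.Ioo 0 1 := by
  have hM : (1 : ℝ) ≤ M := by exact_mod_cast hM1
  have hMK : (M : ℝ) ≤ K := by exact_mod_cast hMK
  have he : 2 ≤ exp 1 := by linarith [add_one_le_exp 1]
  refine ⟨by positivity, (div_lt_one (by positivity)).mpr ?_⟩
  nlinarith

theorem measure_tailQuantile_lt_orderStat_le (hmeas : ∀ k, Measurable (X k))
    (hF : Continuous F) (hcdf : ∀ k, cdfOf μ (X k) = F) (hX : MDepFam μ m X) (hM1 : 1 ≤ M)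
    (hMK : M ≤ K) :
    μ {ω | tailQuantile F (M / (exp 1 * (K + m + 1))) <
        orderStat (fun k => X k ω) (K - M + 1)} ≤
      ENNReal.ofReal ((m + 1) * exp (-(M / (exp 1 * (m + 1))))) := by
  obtain ⟨hp0, hp1⟩ := div_exp_mul_mem_Ioo m hM1 hMK
  set p := (M : ℝ) / (exp 1 * (K + m + 1)) with hp_def
  have hp : ∀ k, μ.real {ω | tailQuantile F p < X k ω} ≤ p := fun k => by
    rw [← hcdf k] at hF ⊢
    exact (measureReal_tailQuantile_lt (hmeas k) hF hp0 hp1).le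
  calc _ ≤ μ {ω | (M : ℝ) ≤ #{k | tailQuantile F p < X k ω}} := by
        refine measure_mono fun ω hω => ?_
        have h := le_card_filter_lt_of_lt_orderStat _ (by omega) (by omega) hω
        rw [show K + 1 - (K - M + 1) = M by omega] at h
        exact_mod_cast h
    _ ≤ _ := hX.measure_le_card_filter_lt_le hmeas hp0.le hp M
    -- the level `p` is chosen so that the Chernoff exponent collapses to `-M/(e(m+1))`
    _ = _ := by
        congr 3
        rw [hp_def]
        field_simp
        ring

theorem measure_forall_lt_orderStat_le (hmeas : ∀ k, Measurable (X k)) (hF : Continuous F)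
    (hcdf : ∀ k, cdfOf μ (X k) = F) (hX : MDepFam μ m X) (hM1 : 1 ≤ M) (hMK : M ≤ K)
    (E : Finset (Fin K)) :
    μ {ω | ∀ k ∈ E, X k ω < orderStat (fun k => X k ω) (K - M + 1)} ≤
      μ {ω | tailQuantile F (M / (exp 1 * (K + m + 1))) <
          orderStat (fun k => X k ω) (K - M + 1)} +
        ENNReal.ofReal ((1 - M / (exp 1 * (K + m + 1))) ^ ((#E : ℝ) / (m + 1))) := by
  obtain ⟨hp0, hp1⟩ := div_exp_mul_mem_Ioo m hM1 hMK
  set p := (M : ℝ) / (exp 1 * (K + m + 1))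
  set δ := tailQuantile F p
  obtain ⟨r, -, hr⟩ := exists_card_inter_residueClass_ge m.succ_pos E
  set S := E ∩ residueClass K (m + 1) r
  have hind := hX.iIndepFun_of_subset_residueClass (inter_subset_right : S ⊆ _)
  have hsub : {ω | ∀ k ∈ E, X k ω < orderStat (fun k => X k ω) (K - M + 1)} ⊆
      {ω | δ < orderStat (fun k => X k ω) (K - M + 1)} ∪
        ⋂ i ∈ (univ : Finset S), X i ⁻¹' Set.Iio δ := by
    intro ω hω
    refine (lt_or_ge δ _).imp id fun hle => Set.mem_iInter₂.mpr fun i _ => ?_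
    exact (hω i (mem_of_mem_inter_left i.2)).trans_le hle
  have hlow : ∀ k, μ (X k ⁻¹' Set.Iio δ) ≤ ENNReal.ofReal (1 - p) := fun k => by
    rw [← hcdf k] at hF
    simp only [δ, ← hcdf k]
    exact measure_lt_tailQuantile_le (hmeas k) hF hp0 hp1
  have hall : μ (⋂ i ∈ (univ : Finset S), X i ⁻¹' Set.Iio δ) ≤
      ENNReal.ofReal ((1 - p) ^ ((#E : ℝ) / (m + 1))) := by
    rw [hind.measure_inter_preimage_eq_mul _ fun _ _ => measurableSet_Iio]
    calc ∏ i ∈ (univ : Finset S), μ (X i ⁻¹' Set.Iio δ)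
        ≤ ∏ _i ∈ (univ : Finset S), ENNReal.ofReal (1 - p) := prod_le_prod' fun i _ => hlow i
      _ = ENNReal.ofReal ((1 - p) ^ #S) := by
          rw [prod_const, card_univ, Fintype.card_coe, ENNReal.ofReal_pow (by linarith)]
      _ ≤ ENNReal.ofReal ((1 - p) ^ ((#E : ℝ) / (m + 1))) := by
          rw [← Real.rpow_natCast]
          refine ENNReal.ofReal_le_ofReal
            (rpow_le_rpow_of_exponent_ge (by linarith) (by linarith) ?_)
          simpa using hr
  exact (measure_mono hsub).trans ((measure_union_le _ _).trans (add_le_add_right hall _))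

end OrderStatTail

lemma exp_neg_div_le_inv_rpow {a ε K M : ℝ} (ha : 0 < a) (hε : 0 ≤ ε) (hK : 1 ≤ K)
    (hM : a * (exp 1 + ε) * log K ≤ M) :
    exp (-(M / (exp 1 * a))) ≤ (K ^ (1 + ε / 3))⁻¹ := by
  have hlog : 0 ≤ log K := log_nonneg hK
  have he : exp 1 ≤ 3 := exp_one_lt_d9.le.trans (by norm_num)
  rw [rpow_def_of_pos (by linarith), ← exp_neg, exp_le_exp, neg_le_neg_iff,
    le_div_iff₀ (by positivity)]
  nlinarith [mul_nonneg (mul_nonneg hlog ha.le) hε, mul_nonneg (mul_nonneg hlog ha.le)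
    (mul_nonneg hε (sub_nonneg.mpr he))]

theorem stmt_19_general (m : ℕ) (ε : ℝ) (hε : 0 < ε)
    (F : ℝ → ℝ) (hFcont : Continuous F)
    (Ω : ℕ → Type) (inst : ∀ K, MeasurableSpace (Ω K))
    (μ : ∀ K, Measure (Ω K)) (hprob : ∀ K, IsProbabilityMeasure (μ K))
    (X : ∀ K, Fin K → Ω K → ℝ)
    (hmeas : ∀ K k, Measurable (X K k))
    (hcdf : ∀ K (k : Fin K), cdfOf (μ K) (X K k) = F)
    (hmdep : ∀ K, MDepFam (μ K) m (X K))
    (M : ℕ → ℕ)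
    (hM0 : Tendsto (fun K => (M K : ℝ) / K) atTop (nhds 0))
    (hM : ∀ K : ℕ, ((m : ℝ) + 1) * (Real.exp 1 + ε) * Real.log K ≤ M K) :
    ∃ K₀ : ℕ, ∀ K : ℕ, K₀ < K →
      (μ K {ω | tailQuantile F ((M K : ℝ) / (Real.exp 1 * ((K : ℝ) + m + 1))) <
            orderStat (fun k => X K k ω) (K - M K + 1)} ≤
        ENNReal.ofReal (((m : ℝ) + 1) / (K : ℝ) ^ (1 + ε / 3))) ∧
      ∀ E : Finset (Fin K),
        μ K {ω | ∀ k ∈ E, X K k ω < orderStat (fun k => X K k ω) (K - M K + 1)} ≤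
          ENNReal.ofReal (((m : ℝ) + 1) *
              Real.exp (-((M K : ℝ) / (Real.exp 1 * ((m : ℝ) + 1))) *
                ((1 - ((m : ℝ) + 1) / K) / (1 + ((m : ℝ) + 1) / K))) +
            (1 - (M K : ℝ) / (Real.exp 1 * ((K : ℝ) + m + 1))) ^ ((E.card : ℝ) / ((m : ℝ) + 1))) := by
  obtain ⟨K₁, hK₁⟩ := eventually_atTop.mp (hM0.eventually (eventually_lt_nhds one_pos))
  refine ⟨max K₁ 1, fun K hK => ?_⟩
  have hK1 : (1 : ℝ) < K := by exact_mod_cast (le_max_right K₁ 1).trans_lt hK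
  have hm : (0 : ℝ) < m + 1 := by positivity
  have hMK : M K ≤ K := by
    have := (div_lt_one (by linarith)).mp (hK₁ K (le_max_left K₁ 1 |>.trans hK.le))
    exact_mod_cast this.le
  have hM1 : 1 ≤ M K := by
    have : (0 : ℝ) < M K := (hM K).trans_lt' (by have := Real.log_pos hK1; positivity)
    exact_mod_cast this
  have hA := measure_tailQuantile_lt_orderStat_le (hmeas K) hFcont (hcdf K) (hmdep K) hM1 hMK
  refine ⟨hA.trans (ENNReal.ofReal_le_ofReal ?_), fun E => ?_⟩
  · rw [div_eq_mul_inv]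
    exact mul_le_mul_of_nonneg_left (exp_neg_div_le_inv_rpow hm hε.le hK1.le (hM K)) hm.le
  · refine (measure_forall_lt_orderStat_le (hmeas K) hFcont (hcdf K) (hmdep K) hM1 hMK E).trans ?_
    rw [ENNReal.ofReal_add (by positivity)
      (Real.rpow_nonneg (sub_nonneg.mpr (div_exp_mul_mem_Ioo m hM1 hMK).2.le) _)]
    refine add_le_add_left (hA.trans (ENNReal.ofReal_le_ofReal ?_)) _
    have hratio : (1 - ((m : ℝ) + 1) / K) / (1 + ((m : ℝ) + 1) / K) ≤ 1 :=
      (div_le_one (by positivity)).mpr (by linarith [div_pos hm (by linarith : (0 : ℝ) < K)])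
    have hx : (0 : ℝ) ≤ M K / (Real.exp 1 * (m + 1)) := by positivity
    gcongr
    nlinarith

/-- for identically `F`-distributed (continuous, unbounded), `m`-dependent
`X_1,…,X_K`, with `M_K/K → 0`, `M_K ≥ (m+1)(e+ε) ln K`, and
`δ_K = q̄_F(M_K/(e(K+m+1)))`, there is `K₀` such that for all `K > K₀`:
(i) `P(X_{(K-M_K+1)} > δ_K) ≤ (m+1)/K^{1+ε/3}`; and (ii) for every deterministic
`𝓔 ⊆ {1,…,K}` of size `E`, `P(𝓜_K ∩ 𝓔 = ∅) ≤
(m+1) exp(-(M_K/(e(m+1)))·(1-(m+1)/K)/(1+(m+1)/K)) + (1 - M_K/(e(K+m+1)))^{E/(m+1)}`,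
where `𝓜_K = {k | X_k ≥ X_{(K-M_K+1)}}`. -/
theorem stmt_19 (m : ℕ) (ε : ℝ) (hε : 0 < ε)
    (F : ℝ → ℝ) (hFcont : Continuous F) (hFunb : ∀ x, F x < 1)
    (Ω : ℕ → Type) (inst : ∀ K, MeasurableSpace (Ω K))
    (μ : ∀ K, Measure (Ω K)) (hprob : ∀ K, IsProbabilityMeasure (μ K))
    (X : ∀ K, Fin K → Ω K → ℝ)
    (hmeas : ∀ K k, Measurable (X K k))
    (hcdf : ∀ K (k : Fin K), cdfOf (μ K) (X K k) = F)
    (hmdep : ∀ K, MDepFam (μ K) m (X K))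
    (M : ℕ → ℕ)
    (hM0 : Tendsto (fun K => (M K : ℝ) / K) atTop (nhds 0))
    (hM : ∀ K : ℕ, ((m : ℝ) + 1) * (Real.exp 1 + ε) * Real.log K ≤ M K) :
    ∃ K₀ : ℕ, ∀ K : ℕ, K₀ < K →
      (μ K {ω | tailQuantile F ((M K : ℝ) / (Real.exp 1 * ((K : ℝ) + m + 1))) <
            orderStat (fun k => X K k ω) (K - M K + 1)} ≤
        ENNReal.ofReal (((m : ℝ) + 1) / (K : ℝ) ^ (1 + ε / 3))) ∧
      ∀ E : Finset (Fin K),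
        μ K {ω | ∀ k ∈ E, X K k ω < orderStat (fun k => X K k ω) (K - M K + 1)} ≤
          ENNReal.ofReal (((m : ℝ) + 1) *
              Real.exp (-((M K : ℝ) / (Real.exp 1 * ((m : ℝ) + 1))) *
                ((1 - ((m : ℝ) + 1) / K) / (1 + ((m : ℝ) + 1) / K))) +
            (1 - (M K : ℝ) / (Real.exp 1 * ((K : ℝ) + m + 1))) ^ ((E.card : ℝ) / ((m : ℝ) + 1))) :=
  stmt_19_general m ε hε F hFcont Ω inst μ hprob X hmeas hcdf hmdep M hM0 hM
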